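/- arXiv:2402.06157 — 7 statements merged into one kernel-verified Lean document; each statement's English description precedes it below -/
import Mathlib

section
/- Let G be a finite group. The set K(G) = {x ∈ G : ⟨x, g⟩ is cyclic for all g ∈ G} is a subgroup of G. -/
/-- `K(G)`: the set of elements `x` such that `⟨x, g⟩` is cyclic for all `g ∈ G`
(the universal vertices of the enhanced power graph together with the identity). -/
def KSet (G : Type*) [Group G] : Set G :=
  {x | ∀ g : G, IsCyclic (Subgroup.closure ({x, g} : Set G))}

/-- A group is generalized quaternion if it is isomorphic to `Q_{2^n}` for some `n ≥ 3`. -/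
def IsGeneralizedQuaternion (Q : Type*) [Group Q] : Prop :=
  ∃ n : ℕ, 3 ≤ n ∧ Nonempty (Q ≃* QuaternionGroup (2 ^ (n - 2)))

/-- The enhanced power graph of `G`: vertices are nonidentity elements, with an edge
between distinct `x` and `y` iff `⟨x, y⟩` is cyclic. -/
def enhancedPowerGraph (G : Type*) [Group G] : SimpleGraph {g : G // g ≠ 1} where
  Adj x y := x ≠ y ∧ IsCyclic (Subgroup.closure ({x.1, y.1} : Set G))
  symm := ⟨fun x y => by
    rintro ⟨hne, hc⟩
    exact ⟨hne.symm, by rwa [Set.pair_comm]⟩⟩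
  loopless := ⟨fun x => by simp⟩

/-- `zpowers g` is a cyclic subgroup. -/
lemma isCyclic_zpowers' {G : Type*} [Group G] (g : G) : IsCyclic (Subgroup.zpowers g) := by
  refine ⟨⟨g, Subgroup.mem_zpowers g⟩, ?_⟩
  rintro ⟨x, hx⟩
  obtain ⟨n, hn⟩ := Subgroup.mem_zpowers_iff.mp hx
  exact ⟨n, Subtype.ext (by simpa using hn)⟩

/-- A subgroup contained in a cyclic subgroup is cyclic. -/
lemma isCyclic_of_le' {G : Type*} [Group G] {H K : Subgroup G} (h : H ≤ K)
    (hK : IsCyclic K) : IsCyclic H := by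
  haveI := hK
  exact isCyclic_of_surjective (Subgroup.subgroupOfEquivOfLe h).toMonoidHom
    (Subgroup.subgroupOfEquivOfLe h).surjective

/-- A cyclic subgroup is contained in the `zpowers` of one of its elements. -/
lemma exists_zpowers_le' {G : Type*} [Group G] {H : Subgroup G} (h : IsCyclic H) :
    ∃ a : G, a ∈ H ∧ H ≤ Subgroup.zpowers a := by
  obtain ⟨⟨a, haH⟩, hgen⟩ := h
  refine ⟨a, haH, fun x hx => ?_⟩
  obtain ⟨n, hn⟩ := hgen ⟨x, hx⟩
  exact ⟨n, by simpa using congrArg Subtype.val hn⟩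

/-- For a finite group `G`, the set `K(G)` is a subgroup of `G`. -/
theorem KSet_isSubgroup (G : Type*) [Group G] [Finite G] :
    ∃ H : Subgroup G, (H : Set G) = KSet G := by
  refine ⟨{ carrier := KSet G, one_mem' := ?hone, mul_mem' := ?hmul, inv_mem' := ?hinv }, rfl⟩
  case hone =>
    intro g
    refine isCyclic_of_le' ?_ (isCyclic_zpowers' g)
    rw [Subgroup.closure_le]
    rintro x (rfl | rfl)
    · exact one_mem _
    · exact Subgroup.mem_zpowers _
  case hmul =>
    rintro x y hx hy g
    obtain ⟨a, haH, hle⟩ := exists_zpowers_le' (hx g)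
    obtain ⟨b, hbH, hle'⟩ := exists_zpowers_le' (hy a)
    have hza : Subgroup.zpowers a ≤ Subgroup.closure ({y, a} : Set G) :=
      Subgroup.zpowers_le.mpr (Subgroup.subset_closure (Set.mem_insert_of_mem _ rfl))
    have hxb : x ∈ Subgroup.zpowers b :=
      hle' (hza (hle (Subgroup.subset_closure (Set.mem_insert _ _))))
    have hgb : g ∈ Subgroup.zpowers b :=
      hle' (hza (hle (Subgroup.subset_closure (Set.mem_insert_of_mem _ rfl))))
    have hyb : y ∈ Subgroup.zpowers b :=
      hle' (Subgroup.subset_closure (Set.mem_insert _ _))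
    refine isCyclic_of_le' ?_ (isCyclic_zpowers' b)
    rw [Subgroup.closure_le]
    rintro z (rfl | rfl)
    · exact mul_mem hxb hyb
    · exact hgb
  case hinv =>
    intro x hx g
    refine isCyclic_of_le' ?_ (hx g)
    rw [Subgroup.closure_le]
    rintro z (rfl | rfl)
    · exact inv_mem (Subgroup.subset_closure (Set.mem_insert _ _))
    · exact Subgroup.subset_closure (Set.mem_insert_of_mem _ rfl)
end

section
/- Let G be a finite group and p a prime. Then G has a unique subgroup of order p and that subgroup is central in G if and only if p divides |K(G)|. -/
open Subgroup

section Aux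

variable {G : Type*} [Group G]

private lemma isCyclic_zpowers'_s3 (g : G) : IsCyclic (zpowers g) := by
  constructor
  refine ⟨⟨g, mem_zpowers g⟩, fun x => ?_⟩
  obtain ⟨x, k, rfl⟩ := x
  exact ⟨k, by ext; simp⟩

private lemma isCyclic_of_le'_s3 {H M : Subgroup G} (hle : H ≤ M) (hM : IsCyclic M) : IsCyclic H := by
  haveI := hM
  exact isCyclic_of_surjective _ (Subgroup.subgroupOfEquivOfLe hle).surjective

/-- maximal cyclic subgroup predicate -/
private def MaxCyc (M : Subgroup G) : Prop :=
  IsCyclic M ∧ ∀ N : Subgroup G, IsCyclic N → M ≤ N → N = M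

private lemma exists_maxcyc_mem [Finite G] (x : G) :
    ∃ M : Subgroup G, MaxCyc M ∧ x ∈ M := by
  haveI : Finite (Subgroup G) := Finite.of_injective _ SetLike.coe_injective
  obtain ⟨M, hMs, hmax⟩ := Set.Finite.exists_maximalFor (fun N : Subgroup G => Nat.card N)
    {N : Subgroup G | IsCyclic N ∧ x ∈ N} (Set.toFinite _)
    ⟨zpowers x, isCyclic_zpowers'_s3 x, mem_zpowers x⟩
  refine ⟨M, ⟨hMs.1, fun N hN hle => ?_⟩, hMs.2⟩
  have hNs : N ∈ {N : Subgroup G | IsCyclic N ∧ x ∈ N} := ⟨hN, hle hMs.2⟩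
  have hcard := hmax hNs (Subgroup.card_le_of_le hle)
  exact (Subgroup.eq_of_le_of_card_ge hle hcard).symm

private lemma mem_KSet_iff [Finite G] {x : G} :
    x ∈ KSet G ↔ ∀ M : Subgroup G, MaxCyc M → x ∈ M := by
  constructor
  · intro hx M hM
    obtain ⟨g, hgen⟩ := hM.1.exists_generator
    have hMz : M = zpowers (g : G) := by
      apply le_antisymm
      · intro m hm
        obtain ⟨k, hk⟩ := hgen ⟨m, hm⟩
        exact ⟨k, by simpa using congrArg Subtype.val hk⟩
      · exact zpowers_le.2 g.2
    have hle : M ≤ closure ({x, (g : G)} : Set G) := by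
      calc M = zpowers (g : G) := hMz
        _ ≤ _ := zpowers_le.2 (subset_closure (by simp))
    have := hM.2 _ (hx (g : G)) hle
    exact this ▸ subset_closure (by simp)
  · intro h g
    obtain ⟨M, hM, hgM⟩ := exists_maxcyc_mem g
    have hle : closure ({x, g} : Set G) ≤ M := by
      rw [closure_le]
      rintro y (rfl | rfl)
      · exact h M hM
      · exact hgM
    exact isCyclic_of_le'_s3 hle hM.1

/-- `K(G)` as a subgroup: the intersection of all maximal cyclic subgroups. -/
private noncomputable def KSub (G : Type*) [Group G] : Subgroup G :=
  ⨅ M ∈ {M : Subgroup G | MaxCyc M}, M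

private lemma KSet_eq_KSub (G : Type*) [Group G] [Finite G] : KSet G = (KSub G : Set G) := by
  ext x
  simp only [KSub, SetLike.mem_coe, Subgroup.mem_iInf]
  exact mem_KSet_iff

private lemma commute_of_mem_KSet' {x g : G}
    (h : IsCyclic (Subgroup.closure ({x, g} : Set G))) : Commute x g := by
  have hx : x ∈ closure ({x, g} : Set G) := subset_closure (by simp)
  have hg : g ∈ closure ({x, g} : Set G) := subset_closure (by simp)
  obtain ⟨c, hgen⟩ := h.exists_generator
  obtain ⟨i, hi⟩ := hgen ⟨x, hx⟩
  obtain ⟨j, hj⟩ := hgen ⟨g, hg⟩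
  have hx' : ((c : G)) ^ i = x := by simpa [Subtype.ext_iff] using hi
  have hg' : ((c : G)) ^ j = g := by simpa [Subtype.ext_iff] using hj
  have hc := (Commute.refl (c : G)).zpow_zpow i j
  rwa [hx', hg'] at hc

private lemma mem_zpowers_of_pow_eq_one {M : Type*} [Group M] [Finite M] [IsCyclic M]
    {p : ℕ} (hp : p.Prime) {z x : M} (hz : orderOf z = p) (hx : x ^ p = 1) :
    x ∈ Subgroup.zpowers z := by
  classical
  haveI : Fintype M := Fintype.ofFinite M
  have hcard : (Set.toFinset (zpowers z : Set M)).card = p := by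
    simp [Set.toFinset_card, ← Nat.card_eq_fintype_card, Nat.card_zpowers, hz]
  have hsub : Set.toFinset (zpowers z : Set M) ⊆
      Finset.univ.filter (fun a : M => a ^ p = 1) := by
    intro a ha
    simp only [Set.mem_toFinset, SetLike.mem_coe, mem_zpowers_iff] at ha
    obtain ⟨k, rfl⟩ := ha
    have hkey : (z ^ k) ^ p = (z ^ p) ^ k := by
      rw [← zpow_natCast, ← zpow_mul, mul_comm, zpow_mul, zpow_natCast]
    simp only [Finset.mem_filter, Finset.mem_univ, true_and]
    rw [hkey, ← hz, pow_orderOf_eq_one, one_zpow]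
  have hle := IsCyclic.card_pow_eq_one_le (α := M) hp.pos (n := p)
  have heq := Finset.eq_of_subset_of_card_le hsub (le_trans hle hcard.ge)
  have hxA : x ∈ Finset.univ.filter (fun a : M => a ^ p = 1) := by simp [hx]
  rw [← heq] at hxA
  simpa using hxA

end Aux

/-- `G` has a unique subgroup of order `p`, and it is central, iff `p ∣ |K(G)|`. -/
theorem unique_central_subgroup_iff_dvd_card_KSet (G : Type*) [Group G] [Finite G]
    (p : ℕ) (hp : p.Prime) :
    (∃ Z : Subgroup G, Nat.card Z = p ∧ Z ≤ Subgroup.center G ∧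
      ∀ X : Subgroup G, Nat.card X = p → X = Z) ↔ p ∣ Nat.card ↥(KSet G) := by
  haveI : Fact p.Prime := ⟨hp⟩
  have hKcard : Nat.card ↥(KSet G) = Nat.card (KSub G) := by
    rw [KSet_eq_KSub]
    rfl
  constructor
  · rintro ⟨Z, hZcard, hZc, hZu⟩
    obtain ⟨z', hz'⟩ := exists_prime_orderOf_dvd_card' (G := Z) p (by rw [hZcard])
    have hzord : orderOf (z' : G) = p := by rw [Subgroup.orderOf_coe, hz']
    set z : G := (z' : G) with hzdef
    have hzZ : z ∈ Z := z'.2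
    have hzK : z ∈ KSet G := by
      intro g
      have hcomm : Commute z g := ((Subgroup.mem_center_iff.1 (hZc hzZ)) g).symm
      by_cases hzC : z ∈ zpowers g
      · refine isCyclic_of_le'_s3 ?_ (isCyclic_zpowers'_s3 g)
        rw [closure_le]
        rintro y (rfl | rfl)
        · exact hzC
        · exact mem_zpowers _
      · have hpg : ¬ p ∣ orderOf g := by
          intro hdvd
          obtain ⟨w', hw'⟩ := exists_prime_orderOf_dvd_card' (G := zpowers g) p
            (by rwa [Nat.card_zpowers])
          have hwZ : zpowers (w' : G) = Z :=
            hZu _ (by rw [Nat.card_zpowers, Subgroup.orderOf_coe, hw'])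
          have hzw : z ∈ zpowers (w' : G) := hwZ ▸ hzZ
          exact hzC (zpowers_le.2 w'.2 hzw)
        have hcop : Nat.Coprime (orderOf g) p := (hp.coprime_iff_not_dvd.2 hpg).symm
        obtain ⟨b, -, hb⟩ := Nat.exists_mul_mod_eq_one_of_coprime hcop hp.one_lt
        have hzmem : z ∈ zpowers (g * z) := by
          have hzcomp : (g * z) ^ (orderOf g * b) = z := by
            rw [hcomm.symm.mul_pow]
            have h1 : g ^ (orderOf g * b) = 1 := by
              rw [pow_mul, pow_orderOf_eq_one, one_pow]
            rw [h1, one_mul]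
            conv_lhs => rw [← pow_mod_orderOf]
            rw [hzord, hb, pow_one]
          have hmm := npow_mem_zpowers (g * z) (orderOf g * b)
          rwa [hzcomp] at hmm
        have hgmem : g ∈ zpowers (g * z) := by
          have hmm : (g * z) * z⁻¹ ∈ zpowers (g * z) :=
            mul_mem (mem_zpowers _) (inv_mem hzmem)
          rwa [mul_inv_cancel_right] at hmm
        refine isCyclic_of_le'_s3 ?_ (isCyclic_zpowers'_s3 (g * z))
        rw [closure_le]
        rintro y (rfl | rfl)
        · exact hzmem
        · exact hgmem
    have hZz : zpowers z = Z :=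
      Subgroup.eq_of_le_of_card_ge (zpowers_le.2 hzZ)
        (by rw [Nat.card_zpowers, hzord, hZcard])
    have hZK : Z ≤ KSub G := by
      rw [← hZz]
      refine zpowers_le.2 ?_
      have : z ∈ (KSub G : Set G) := KSet_eq_KSub G ▸ hzK
      exact this
    rw [hKcard, ← hZcard]
    exact Subgroup.card_dvd_of_le hZK
  · intro hdvd
    rw [hKcard] at hdvd
    obtain ⟨z', hz'⟩ := exists_prime_orderOf_dvd_card' (G := KSub G) p hdvd
    have hzord : orderOf (z' : G) = p := by rw [Subgroup.orderOf_coe, hz']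
    set z : G := (z' : G) with hzdef
    have hzK : z ∈ KSet G := by
      rw [KSet_eq_KSub]
      exact z'.2
    refine ⟨zpowers z, by rw [Nat.card_zpowers, hzord], ?_, ?_⟩
    · refine zpowers_le.2 (Subgroup.mem_center_iff.2 fun g => ?_)
      exact (commute_of_mem_KSet' (hzK g)).eq.symm
    · intro X hX
      obtain ⟨x', hx'⟩ := exists_prime_orderOf_dvd_card' (G := X) p (by rw [hX])
      have hxord : orderOf (x' : G) = p := by rw [Subgroup.orderOf_coe, hx']
      set x : G := (x' : G) with hxdef
      have hXx : zpowers x = X :=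
        Subgroup.eq_of_le_of_card_ge (zpowers_le.2 x'.2)
          (by rw [Nat.card_zpowers, hxord, hX])
      haveI hMcyc : IsCyclic (closure ({z, x} : Set G)) := hzK x
      have hzM : z ∈ closure ({z, x} : Set G) := subset_closure (by simp)
      have hxM : x ∈ closure ({z, x} : Set G) := subset_closure (by simp)
      have hzo : orderOf (⟨z, hzM⟩ : closure ({z, x} : Set G)) = p := by
        rw [Subgroup.orderOf_mk, hzord]
      have hxp : (⟨x, hxM⟩ : closure ({z, x} : Set G)) ^ p = 1 := by
        ext
        simp [← hxord, pow_orderOf_eq_one]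
      obtain ⟨k, hk⟩ := mem_zpowers_of_pow_eq_one hp hzo hxp
      have hxz : x ∈ zpowers z := ⟨k, by simpa [Subtype.ext_iff] using hk⟩
      rw [← hXx]
      exact Subgroup.eq_of_le_of_card_ge (zpowers_le.2 hxz)
        (by rw [Nat.card_zpowers, Nat.card_zpowers, hxord, hzord])
end

section
/- If Q is a generalized quaternion group of order 2^n with n ≥ 4, then the automorphism group Aut(Q) is a 2-group. -/
namespace QuatAux
open QuaternionGroup

variable {m : ℕ}

lemma a_pow (j : ZMod (2 * m)) (t : ℕ) :
    (a j : QuaternionGroup m) ^ t = a ((t : ZMod (2 * m)) * j) := by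
  induction t with
  | zero => simp
  | succ t ih =>
      rw [pow_succ, ih, a_mul_a]
      congr 1
      push_cast
      ring

lemma map_a [NeZero m] (σ : MulAut (QuaternionGroup m)) {j : ZMod (2 * m)}
    (h : σ (a 1) = a j) (i : ZMod (2 * m)) : σ (a i) = a (j * i) := by
  haveI : NeZero (2 * m) := ⟨Nat.mul_ne_zero two_ne_zero (NeZero.ne m)⟩
  have hi : (a i : QuaternionGroup m) = (a 1) ^ i.val := by
    rw [a_one_pow, ZMod.natCast_zmod_val]
  rw [hi, map_pow, h, a_pow, ZMod.natCast_zmod_val, mul_comm]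

lemma unit_of [NeZero m] (σ : MulAut (QuaternionGroup m)) {j : ZMod (2 * m)}
    (h : σ (a 1) = a j) : IsUnit j := by
  haveI : NeZero (2 * m) := ⟨Nat.mul_ne_zero two_ne_zero (NeZero.ne m)⟩
  have ho : orderOf (σ (a 1)) = orderOf (a 1 : QuaternionGroup m) :=
    orderOf_injective σ.toMonoidHom σ.injective _
  rw [h, orderOf_a_one, orderOf_a] at ho
  have hg : Nat.gcd (2 * m) j.val = 1 := by
    rcases (Nat.div_eq_self.mp ho) with h0 | h1
    · exact absurd h0 (NeZero.ne (2 * m))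
    · exact h1
  have : IsUnit ((j.val : ZMod (2 * m))) :=
    (ZMod.isUnit_iff_coprime _ _).mpr (Nat.coprime_comm.mp hg)
  rwa [ZMod.natCast_zmod_val] at this

lemma xa_of [NeZero m] (σ : MulAut (QuaternionGroup m)) {j : ZMod (2 * m)}
    (hj : IsUnit j) (h : σ (a 1) = a j) : ∃ k, σ (xa 0) = xa k := by
  cases hx : σ (xa 0) with
  | a i =>
      exfalso
      obtain ⟨u, rfl⟩ := hj
      have h2 : σ (a ((↑u⁻¹ : ZMod (2 * m)) * i)) = a i := by
        rw [map_a σ h, ← mul_assoc]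
        norm_cast
        simp
      have := σ.injective (hx.trans h2.symm)
      cases this
  | xa k => exact ⟨k, rfl⟩

lemma ext_one [NeZero m] (σ : MulAut (QuaternionGroup m))
    (h1 : σ (a 1) = a 1) (h2 : σ (xa 0) = xa 0) : σ = 1 := by
  ext g
  cases g with
  | a i => rw [map_a σ h1 i, one_mul]; rfl
  | xa i =>
      have hi : (xa i : QuaternionGroup m) = xa 0 * a i := by simp
      rw [hi, map_mul, h2, map_a σ h1, one_mul]
      rfl

lemma pow_a [NeZero m] (σ : MulAut (QuaternionGroup m)) {j : ZMod (2 * m)}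
    (h : σ (a 1) = a j) (t : ℕ) : (σ ^ t) (a 1) = a (j ^ t) := by
  induction t with
  | zero => simp
  | succ t ih =>
      rw [pow_succ', MulAut.mul_apply, ih, map_a σ h, pow_succ']

lemma pow_xa [NeZero m] (σ : MulAut (QuaternionGroup m))
    (h1 : σ (a 1) = a 1) {K : ZMod (2 * m)} (h2 : σ (xa 0) = xa K) (t : ℕ) :
    (σ ^ t) (xa 0) = xa ((t : ZMod (2 * m)) * K) := by
  induction t with
  | zero => simp
  | succ t ih =>
      have hx : (xa ((t : ZMod (2 * m)) * K) : QuaternionGroup m)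
          = xa 0 * a ((t : ZMod (2 * m)) * K) := by simp
      rw [pow_succ', MulAut.mul_apply, ih, hx, map_mul, h2, map_a σ h1, one_mul,
        xa_mul_a]
      congr 1
      push_cast
      ring

lemma isPGroup_of_mulEquiv {G H : Type*} [Group G] [Group H] (e : G ≃* H)
    {p : ℕ} (h : IsPGroup p H) : IsPGroup p G := by
  intro g
  obtain ⟨k, hk⟩ := h (e g)
  refine ⟨k, e.injective ?_⟩
  rw [map_pow, hk, map_one]

end QuatAux

open QuaternionGroup QuatAux in
/-- the automorphism group of a generalized quaternion group of order
`2^n ≥ 16` is a `2`-group. -/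
theorem mulAut_generalizedQuaternion_isPGroup (n : ℕ) (hn : 4 ≤ n)
    (Q : Type*) [Group Q] (h : Nonempty (Q ≃* QuaternionGroup (2 ^ (n - 2)))) :
    IsPGroup 2 (MulAut Q) := by
  obtain ⟨e⟩ := h
  set m : ℕ := 2 ^ (n - 2) with hm
  haveI : NeZero m := ⟨by positivity⟩
  haveI : NeZero (2 * m) := ⟨Nat.mul_ne_zero two_ne_zero (NeZero.ne m)⟩
  have h2m : 2 * m = 2 ^ (n - 1) := by
    rw [hm, ← pow_succ']
    congr 1
    omega
  refine isPGroup_of_mulEquiv (MulAut.congr e) ?_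
  intro φ
  refine ⟨(n - 2) + (n - 1), ?_⟩
  -- φ (a 1) = a j for some unit j
  have horder : orderOf (φ (a 1)) = 2 * m :=
    (orderOf_injective φ.toMonoidHom φ.injective _).trans orderOf_a_one
  obtain ⟨j, hj⟩ : ∃ j, φ (a 1) = a j := by
    cases hx : φ (a 1) with
    | a j => exact ⟨j, rfl⟩
    | xa i =>
        exfalso
        rw [hx, orderOf_xa, h2m] at horder
        have h8 : (8 : ℕ) ≤ 2 ^ (n - 1) := by
          calc (8 : ℕ) = 2 ^ 3 := by norm_num
          _ ≤ 2 ^ (n - 1) := Nat.pow_le_pow_right (by norm_num) (by omega)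
        omega
  have hju : IsUnit j := unit_of φ hj
  -- j ^ m = 1
  have hjm : j ^ m = 1 := by
    obtain ⟨u, rfl⟩ := hju
    have hcard : Fintype.card (ZMod (2 * m))ˣ = m := by
      rw [ZMod.card_units_eq_totient, h2m,
        Nat.totient_prime_pow Nat.prime_two (by omega : 0 < n - 1)]
      have hnn : n - 1 - 1 = n - 2 := by omega
      rw [hnn, hm]
      norm_num
    have hu : u ^ Fintype.card (ZMod (2 * m))ˣ = 1 := pow_card_eq_one
    rw [hcard] at hu
    rw [← Units.val_pow_eq_pow_val, hu, Units.val_one]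
  -- ψ := φ ^ m fixes a 1
  set ψ := φ ^ m with hψ
  have hψa : ψ (a 1) = a 1 := by rw [hψ, pow_a φ hj, hjm]
  obtain ⟨K, hψx⟩ := xa_of ψ isUnit_one hψa
  have final : ψ ^ (2 * m) = 1 := by
    apply ext_one
    · rw [pow_a ψ hψa, one_pow]
    · rw [pow_xa ψ hψa hψx, ZMod.natCast_self, zero_mul]
  have key : φ ^ (m * (2 * m)) = 1 := by rw [pow_mul, ← hψ, final]
  rw [pow_add, ← h2m]
  exact key
end

section
/- If G is a finite solvable group with O_{2'}(G) = 1 whose Sylow 2-subgroups are generalized quaternion, and O_2(G) is either cyclic or generalized quaternion of order at least 16, then G is a 2-group. -/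
open QuaternionGroup in
lemma a_pow_general {N : ℕ} (j : ZMod (2 * N)) (m : ℕ) :
    (a j : QuaternionGroup N) ^ m = a ((m : ZMod (2 * N)) * j) := by
  induction m with
  | zero => rw [pow_zero, Nat.cast_zero, zero_mul, one_def]
  | succ r ih =>
      rw [pow_succ, ih, a_mul_a]
      congr 1
      push_cast
      ring

open QuaternionGroup in
lemma quaternion_mulAut_eq_one {k p : ℕ} (hk : 2 ≤ k) (hp : p.Prime) (hp2 : p ≠ 2)
    (ψ : MulAut (QuaternionGroup (2 ^ k))) (hψ : ψ ^ p = 1) : ψ = 1 := by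
  haveI : NeZero (2 ^ k) := ⟨(pow_pos two_pos k).ne'⟩
  have hcop2 : Nat.Coprime p 2 := (Nat.coprime_primes hp Nat.prime_two).mpr hp2
  have hcop : Nat.Coprime p (2 * 2 ^ k) := by
    rw [← pow_succ']
    exact hcop2.pow_right _
  -- ψ (a 1) = a j
  obtain ⟨j, hj⟩ : ∃ j, ψ (a 1) = a j := by
    rcases h : ψ (a 1) with t | t
    · exact ⟨t, rfl⟩
    · exfalso
      have h1 : orderOf (ψ (a 1)) = orderOf (a 1 : QuaternionGroup (2 ^ k)) :=
        orderOf_injective ψ.toMonoidHom ψ.injective _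
      rw [h, orderOf_xa, orderOf_a_one] at h1
      have : (4 : ℕ) < 2 * 2 ^ k := by
        calc (4 : ℕ) = 2 * 2 ^ 1 := by norm_num
        _ < 2 * 2 ^ k := by
          have := Nat.pow_lt_pow_right (a := 2) one_lt_two (by omega : 1 < k)
          omega
      omega
  -- ψ (a i) = a (i * j)
  have haux : ∀ i : ZMod (2 * 2 ^ k), ψ (a i) = a (i * j) := by
    intro i
    have h1 : (a i : QuaternionGroup (2 ^ k)) = (a 1) ^ i.val := by
      rw [a_pow_general, mul_one, ZMod.natCast_val, ZMod.cast_id]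
    rw [h1, map_pow, hj, a_pow_general, ZMod.natCast_val, ZMod.cast_id]
  -- iterate
  have hiter : ∀ (r : ℕ) (i : ZMod (2 * 2 ^ k)), (ψ ^ r) (a i) = a (i * j ^ r) := by
    intro r
    induction r with
    | zero => intro i; simp
    | succ r ih =>
        intro i
        rw [pow_succ, MulAut.mul_apply, haux, ih, pow_succ]
        congr 1
        ring
  -- j ^ p = 1
  have hjp : j ^ p = 1 := by
    have := hiter p 1
    rw [hψ, MulAut.one_apply] at this
    have h2 := a.injEq (n := 2 ^ k) 1 (1 * j ^ p) ▸ this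
    simpa using this.symm
  -- j = 1 via units of ZMod
  have hj1 : j = 1 := by
    have hinv : j * j ^ (p - 1) = 1 := by
      calc j * j ^ (p - 1) = j ^ (1 + (p - 1)) := by rw [pow_add, pow_one]
      _ = j ^ p := by have := hp.two_le; congr 1; omega
      _ = 1 := hjp
    have hinv' : j ^ (p - 1) * j = 1 := by simpa [mul_comm] using hinv
    let u : (ZMod (2 * 2 ^ k))ˣ := ⟨j, j ^ (p - 1), hinv, hinv'⟩
    have hup : u ^ p = 1 := by
      ext
      push_cast [u]
      exact hjp
    have h1 : orderOf u ∣ p := orderOf_dvd_of_pow_eq_one hup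
    have h2 : orderOf u ∣ 2 ^ k := by
      have hoc := orderOf_dvd_card (x := u)
      have htot : Nat.totient (2 * 2 ^ k) = 2 ^ k := by
        rw [(pow_succ' 2 k).symm, Nat.totient_prime_pow Nat.prime_two (Nat.succ_pos k)]
        simp
      rwa [ZMod.card_units_eq_totient, htot] at hoc
    have h3 : orderOf u = 1 := Nat.dvd_one.mp (by
      have hg := Nat.dvd_gcd h1 h2
      rwa [Nat.Coprime.gcd_eq_one (hcop2.pow_right k)] at hg)
    have : u = 1 := orderOf_eq_one_iff.mp h3
    have := congrArg Units.val this
    simpa [u] using this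
  have hfix : ∀ i, ψ (a i) = a i := fun i => by rw [haux, hj1, mul_one]
  obtain ⟨c, hc⟩ : ∃ c, ψ (xa 0) = xa c := by
    rcases hx : ψ (xa 0) with t | t
    · exact absurd (ψ.injective (hx.trans (hfix t).symm)) (by simp)
    · exact ⟨t, rfl⟩
  have hstep : ∀ i, ψ (xa i) = xa (c + i) := by
    intro i
    have h1 : (xa i : QuaternionGroup (2 ^ k)) = xa 0 * a i := by rw [xa_mul_a, zero_add]
    rw [h1, map_mul, hc, hfix, xa_mul_a]
  have hxiter : ∀ (r : ℕ) (i : ZMod (2 * 2 ^ k)),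
      (ψ ^ r) (xa i) = xa (i + (r : ZMod (2 * 2 ^ k)) * c) := by
    intro r
    induction r with
    | zero => intro i; simp
    | succ r ih =>
        intro i
        rw [pow_succ', MulAut.mul_apply, ih, hstep]
        congr 1
        push_cast
        ring
  have hc0 : c = 0 := by
    have hpc : ((p : ℕ) : ZMod (2 * 2 ^ k)) * c = 0 := by
      have h1 := hxiter p 0
      rw [hψ, MulAut.one_apply, zero_add] at h1
      simpa using h1.symm
    have hcu : IsUnit ((p : ℕ) : ZMod (2 * 2 ^ k)) :=
      (ZMod.isUnit_iff_coprime p (2 * 2 ^ k)).mpr hcop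
    exact hcu.mul_left_cancel (hpc.trans (mul_zero _).symm)
  ext x
  rcases x with i | i
  · simpa using hfix i
  · rw [hstep, hc0, zero_add]
    simp
section Helpers

lemma cyclic_mulAut_eq_one {Q : Type*} [Group Q] [Finite Q] (hc : IsCyclic Q)
    (h2 : IsPGroup 2 Q) {p : ℕ} (hp : p.Prime) (hp2 : p ≠ 2)
    (φ : MulAut Q) (hφ : φ ^ p = 1) : φ = 1 := by
  haveI := hc
  haveI : Fact (Nat.Prime 2) := ⟨Nat.prime_two⟩
  obtain ⟨m, hm⟩ := (IsPGroup.iff_card (p := 2)).mp h2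
  have hcard : Nat.card (MulAut Q) = Nat.totient (2 ^ m) := by
    rw [IsCyclic.card_mulAut, hm]
  have hpow : ∃ t, Nat.card (MulAut Q) = 2 ^ t := by
    rcases m with _ | m
    · exact ⟨0, by simpa using hcard⟩
    · refine ⟨m, ?_⟩
      rw [hcard, Nat.totient_prime_pow Nat.prime_two (Nat.succ_pos m)]
      simp
  obtain ⟨t, ht⟩ := hpow
  have h1 : orderOf φ ∣ p := orderOf_dvd_of_pow_eq_one hφ
  have h2' : orderOf φ ∣ 2 ^ t := ht ▸ orderOf_dvd_natCard φ
  have hcop : Nat.Coprime p (2 ^ t) :=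
    ((Nat.coprime_primes hp Nat.prime_two).mpr hp2).pow_right _
  have h3 : orderOf φ = 1 := Nat.dvd_one.mp (by
    have hg := Nat.dvd_gcd h1 h2'
    rwa [Nat.Coprime.gcd_eq_one hcop] at hg)
  exact orderOf_eq_one_iff.mp h3

end Helpers


lemma mulAut_eq_one_of_cyclic_or_quaternion {Q : Type*} [Group Q] [Finite Q]
    (h2 : IsPGroup 2 Q)
    (hQ : IsCyclic Q ∨ (IsGeneralizedQuaternion Q ∧ 16 ≤ Nat.card Q))
    {p : ℕ} (hp : p.Prime) (hp2 : p ≠ 2) (φ : MulAut Q) (hφ : φ ^ p = 1) : φ = 1 := by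
  rcases hQ with hc | ⟨⟨n, hn3, ⟨e⟩⟩, hcard⟩
  · exact cyclic_mulAut_eq_one hc h2 hp hp2 φ hφ
  · haveI : NeZero (2 ^ (n - 2)) := ⟨(pow_pos two_pos _).ne'⟩
    have hcard' : Nat.card Q = 4 * 2 ^ (n - 2) := by
      rw [Nat.card_congr e.toEquiv, Nat.card_eq_fintype_card, QuaternionGroup.card]
    have hk : 2 ≤ n - 2 := by
      have h4 : (4 : ℕ) ≤ 2 ^ (n - 2) := by omega
      have := (Nat.pow_le_pow_iff_right one_lt_two).mp
        (show 2 ^ 2 ≤ 2 ^ (n - 2) by simpa using h4)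
      omega
    have hψ : (MulAut.congr e) φ ^ p = 1 := by rw [← map_pow, hφ, map_one]
    have h1 := quaternion_mulAut_eq_one hk hp hp2 ((MulAut.congr e) φ) hψ
    have h2' := congrArg (MulAut.congr e).symm h1
    rwa [MulEquiv.symm_apply_apply, map_one] at h2'

lemma centralizer_normal_of_normal {G : Type*} [Group G] (Q : Subgroup G) (hQn : Q.Normal) :
    (Subgroup.centralizer (Q : Set G)).Normal := by
  constructor
  intro c hc g
  rw [Subgroup.mem_centralizer_iff] at hc ⊢
  intro h hh
  have hh' : g⁻¹ * h * g ∈ Q := by simpa using hQn.conj_mem h hh g⁻¹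
  have hcomm := hc _ hh'
  calc h * (g * c * g⁻¹) = g * (g⁻¹ * h * g * c) * g⁻¹ := by group
  _ = g * (c * (g⁻¹ * h * g)) * g⁻¹ := by rw [hcomm]
  _ = g * c * g⁻¹ * h := by group

instance myDerivedSeriesChar (H : Type*) [Group H] : ∀ n, (derivedSeries H n).Characteristic
  | 0 => by rw [derivedSeries_zero]; exact Subgroup.topCharacteristic
  | (n + 1) => by
      rw [derivedSeries_succ]
      haveI := myDerivedSeriesChar H n
      exact Subgroup.commutator_characteristic _ _

lemma derived_step {G : Type*} [Group G] [Finite G]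
    (hodd : ∀ N : Subgroup G, N.Normal → Odd (Nat.card N) → N = ⊥)
    (Q : Subgroup G)
    (hQmax : ∀ M : Subgroup G, M.Normal → IsPGroup 2 M → M ≤ Q)
    (C : Subgroup G) (hCn : C.Normal) (hCc : C ≤ Subgroup.centralizer (Q : Set G))
    (i : ℕ) (hE : IsPGroup 2 (derivedSeries C (i + 1))) :
    IsPGroup 2 (derivedSeries C i) := by
  haveI := hCn
  have hDg_n : ((derivedSeries C i).map C.subtype).Normal := inferInstance
  have hEg_n : ((derivedSeries C (i + 1)).map C.subtype).Normal := inferInstance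
  have hEg2 : IsPGroup 2 ((derivedSeries C (i + 1)).map C.subtype) := hE.map _
  have hEQ : (derivedSeries C (i + 1)).map C.subtype ≤ Q := hQmax _ hEg_n hEg2
  set Dg := (derivedSeries C i).map C.subtype with hDgdef
  have hDgC : Dg ≤ C := Subgroup.map_subtype_le _
  have hcommDD : ⁅Dg, Dg⁆ = (derivedSeries C (i + 1)).map C.subtype := by
    rw [hDgdef, ← Subgroup.map_commutator, ← derivedSeries_succ]
  have hcle : commutator ↥Dg ≤ Subgroup.center ↥Dg := by
    intro h hh
    have hmap : (h : G) ∈ (derivedSeries C (i + 1)).map C.subtype := by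
      rw [← hcommDD]
      have h1 : Subgroup.map Dg.subtype (commutator ↥Dg) = ⁅Dg, Dg⁆ := by
        rw [commutator_def, Subgroup.map_commutator, ← MonoidHom.range_eq_map, Subgroup.range_subtype]
      rw [← h1]
      exact Subgroup.mem_map_of_mem _ hh
    rw [Subgroup.mem_center_iff]
    intro g
    have hgc : (g : G) ∈ Subgroup.centralizer (Q : Set G) := hCc (hDgC g.2)
    have := Subgroup.mem_centralizer_iff.mp hgc (h : G) (hEQ hmap)
    exact Subtype.ext (by simpa using this.symm)
  have hnil : Group.IsNilpotent ↥Dg := nilpotent_iff_lowerCentralSeries.mpr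
    ⟨2, lowerCentralSeries_succ_eq_bot ⊤ (by rw [lowerCentralSeries_one]; exact hcle)⟩
  have hcard : ∀ q : ℕ, q.Prime → q ∣ Nat.card ↥Dg → q = 2 := by
    intro q hq hdvd
    by_contra hq2
    haveI : Fact q.Prime := ⟨hq⟩
    obtain ⟨P⟩ := (inferInstance : Nonempty (Sylow q ↥Dg))
    have htfae := (isNilpotent_of_finite_tfae (G := ↥Dg)).out 0 3
    have hPn : (P : Subgroup ↥Dg).Normal := htfae.mp hnil q ⟨hq⟩ P
    haveI := Sylow.characteristic_of_normal P hPn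
    have hSn : ((P : Subgroup ↥Dg).map Dg.subtype).Normal := inferInstance
    have hcardS : Nat.card ((P : Subgroup ↥Dg).map Dg.subtype) = Nat.card P :=
      (Nat.card_congr (Subgroup.equivMapOfInjective _ _
        (Subgroup.subtype_injective Dg)).toEquiv).symm
    have hmult := Sylow.card_eq_multiplicity P
    have hOdd : Odd (Nat.card ((P : Subgroup ↥Dg).map Dg.subtype)) := by
      rw [hcardS, hmult]
      exact (hq.odd_of_ne_two hq2).pow
    have hbot := hodd _ hSn hOdd
    rw [hbot, Subgroup.card_bot] at hcardS
    have hpos := hq.factorization_pos_of_dvd (Nat.card_pos (α := ↥Dg)).ne' hdvd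
    rw [hmult] at hcardS
    have h2q := hq.two_le
    have h1 : q ^ 1 ≤ q ^ (Nat.card ↥Dg).factorization q :=
      Nat.pow_le_pow_right (by omega) hpos
    rw [← hcardS, pow_one] at h1
    omega
  have hne : Nat.card ↥Dg ≠ 0 := (Nat.card_pos (α := ↥Dg)).ne'
  have hDg2 : IsPGroup 2 ↥Dg := IsPGroup.of_card
    (Nat.eq_prime_pow_of_unique_prime_dvd hne (fun {d} hd hdvd => hcard d hd hdvd))
  exact hDg2.of_equiv (Subgroup.equivMapOfInjective _ C.subtype
    (Subgroup.subtype_injective C)).symm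

lemma centralizer_isPGroup {G : Type*} [Group G] [Finite G] (hs : IsSolvable G)
    (hodd : ∀ N : Subgroup G, N.Normal → Odd (Nat.card N) → N = ⊥)
    (Q : Subgroup G) (hQn : Q.Normal)
    (hQmax : ∀ M : Subgroup G, M.Normal → IsPGroup 2 M → M ≤ Q) :
    IsPGroup 2 (Subgroup.centralizer (Q : Set G)) := by
  haveI : Group.IsSolvable G := hs
  set C := Subgroup.centralizer (Q : Set G) with hCdef
  have hCn : C.Normal := centralizer_normal_of_normal Q hQn
  obtain ⟨n, hn⟩ := (inferInstance : Group.IsSolvable ↥C).solvable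
  have key : ∀ m, IsPGroup 2 (derivedSeries ↥C (n - m)) := by
    intro m
    induction m with
    | zero =>
        rw [Nat.sub_zero, hn]
        exact IsPGroup.of_card (by rw [Subgroup.card_bot, pow_zero])
    | succ m ih =>
        by_cases hnm : n ≤ m
        · rw [show n - (m + 1) = n - m by omega]
          exact ih
        · have heq : n - m = n - (m + 1) + 1 := by omega
          rw [heq] at ih
          exact derived_step hodd Q hQmax C hCn le_rfl _ ih
  have h0 := key n
  rw [Nat.sub_self, derivedSeries_zero] at h0
  exact h0.of_equiv Subgroup.topEquiv

/-- if `G` is finite solvable with `O_{2'}(G) = 1`, generalized quaternion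
Sylow `2`-subgroups, and `O_2(G)` cyclic or generalized quaternion of order `≥ 16`,
then `G` is a `2`-group. -/
theorem isPGroup_of_O2_cyclic_or_large_quaternion (G : Type*) [Group G] [Finite G]
    (hs : IsSolvable G)
    (hodd : ∀ N : Subgroup G, N.Normal → Odd (Nat.card N) → N = ⊥)
    (hsyl : ∀ P : Sylow 2 G, IsGeneralizedQuaternion P)
    (Q : Subgroup G) (hQn : Q.Normal) (hQ2 : IsPGroup 2 Q)
    (hQmax : ∀ M : Subgroup G, M.Normal → IsPGroup 2 M → M ≤ Q)
    (hQ : IsCyclic Q ∨ (IsGeneralizedQuaternion Q ∧ 16 ≤ Nat.card Q)) :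
    IsPGroup 2 G := by
  haveI := hQn
  have hC2 := centralizer_isPGroup hs hodd Q hQn hQmax
  have hall : ∀ q : ℕ, q.Prime → q ∣ Nat.card G → q = 2 := by
    intro q hq hdvd
    by_contra hq2
    haveI : Fact q.Prime := ⟨hq⟩
    obtain ⟨x, hx⟩ := exists_prime_orderOf_dvd_card' q hdvd
    have hxq : x ^ q = 1 := by rw [← hx]; exact pow_orderOf_eq_one x
    have hφp : (MulAut.conjNormal (H := Q) x) ^ q = 1 := by
      rw [← map_pow, hxq, map_one]
    have hφ1 : MulAut.conjNormal (H := Q) x = 1 :=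
      mulAut_eq_one_of_cyclic_or_quaternion hQ2 hQ hq hq2 _ hφp
    have hxc : x ∈ Subgroup.centralizer (Q : Set G) := by
      rw [Subgroup.mem_centralizer_iff]
      intro h hh
      have h1 : MulAut.conjNormal (H := Q) x ⟨h, hh⟩ = ⟨h, hh⟩ := by rw [hφ1]; rfl
      have h2 : x * h * x⁻¹ = h := by
        have := congrArg Subtype.val h1
        rwa [MulAut.conjNormal_apply] at this
      calc h * x = (x * h * x⁻¹) * x := by rw [h2]
      _ = x * h := by group
    obtain ⟨k, hk⟩ := hC2 ⟨x, hxc⟩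
    have horder : orderOf (⟨x, hxc⟩ : Subgroup.centralizer (Q : Set G)) = q := by
      rw [← hx]
      exact (orderOf_injective (Subgroup.centralizer (Q : Set G)).subtype
        (Subgroup.subtype_injective _) _).symm
    have hdvd2 : q ∣ 2 ^ k := by
      rw [← horder]
      exact orderOf_dvd_of_pow_eq_one hk
    have := (Nat.prime_dvd_prime_iff_eq hq Nat.prime_two).mp (hq.dvd_of_dvd_pow hdvd2)
    exact hq2 this
  exact IsPGroup.of_card (Nat.eq_prime_pow_of_unique_prime_dvd
    (Nat.card_pos (α := G)).ne' (fun {d} hd hdvd => hall d hd hdvd))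
end

section
/- Let p be a prime, G a finite group with cyclic Sylow p-subgroup P such that Z(G) ∩ P ≠ 1. Then p divides |K(G)|. -/
section Aux

open Subgroup MulAction

variable {G : Type*} [Group G]

lemma aux_isCyclic_of_le {H K : Subgroup G} (hK : IsCyclic K) (h : H ≤ K) : IsCyclic H := by
  haveI := hK
  exact isCyclic_of_surjective (subgroupOfEquivOfLe h) (subgroupOfEquivOfLe h).surjective

lemma aux_mem_zpowers_pow [Finite G] (a : G) {t : ℕ} (h : Nat.Coprime t (orderOf a)) :
    a ∈ zpowers (a ^ t) := by
  rcases eq_or_ne (orderOf a) 1 with h1 | h1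
  · have : a = 1 := orderOf_eq_one_iff.mp h1
    rw [this]
    exact one_mem _
  · have h0 : 1 < orderOf a :=
      Nat.one_lt_iff_ne_zero_and_ne_one.mpr ⟨(orderOf_pos a).ne', h1⟩
    obtain ⟨m, -, hm⟩ := Nat.exists_mul_mod_eq_one_of_coprime h h0
    have key : (a ^ t) ^ m = a := by
      rw [← pow_mul, ← pow_mod_orderOf, hm, pow_one]
    have h2 := pow_mem (mem_zpowers (a ^ t)) m
    rwa [key] at h2

lemma aux_pGroup_isCyclic [Finite G] {p : ℕ} [Fact p.Prime] (P : Sylow p G)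
    (hcyc : IsCyclic (P : Subgroup G)) {Q : Subgroup G} (hQ : IsPGroup p Q) :
    IsCyclic Q := by
  obtain ⟨S, hS⟩ := hQ.exists_le_sylow
  have hScyc : IsCyclic (S : Subgroup G) :=
    isCyclic_of_surjective (Sylow.equiv P S) (Sylow.equiv P S).surjective
  exact aux_isCyclic_of_le hScyc hS

lemma aux_closure_pair_cyclic [Finite G] {p : ℕ} [Fact p.Prime] (P : Sylow p G)
    (hcyc : IsCyclic (P : Subgroup G)) {z : G} (hz : z ∈ Subgroup.center G)
    (hzP : IsPGroup p (zpowers z)) (c : G) :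
    IsCyclic (Subgroup.closure ({z, c} : Set G)) := by
  have hp : p.Prime := Fact.out
  set n := orderOf c with hn
  have hn0 : n ≠ 0 := (orderOf_pos c).ne'
  set k := n.factorization p with hk
  set m := n / p ^ k with hm
  have hpk_dvd : p ^ k ∣ n := Nat.ordProj_dvd n p
  have hmn : p ^ k * m = n := Nat.mul_div_cancel' hpk_dvd
  have hcop : Nat.Coprime p m := Nat.coprime_ordCompl hp hn0
  have hcopkm : Nat.Coprime (p ^ k) m := hcop.pow_left k
  set c1 := c ^ m with hc1
  set c2 := c ^ (p ^ k) with hc2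
  -- c1 is a p-element
  have hc1pk : c1 ^ p ^ k = 1 := by
    rw [hc1, ← pow_mul, mul_comm, hmn, hn, pow_orderOf_eq_one]
  have hc1ord : orderOf c1 ∣ p ^ k := orderOf_dvd_of_pow_eq_one hc1pk
  have hc1P : IsPGroup p (zpowers c1) := by
    obtain ⟨j, _, hj⟩ := (Nat.dvd_prime_pow hp).mp hc1ord
    exact IsPGroup.of_card (by rw [Nat.card_zpowers, hj])
  -- c2 has order coprime to p
  have hc2m : c2 ^ m = 1 := by
    rw [hc2, ← pow_mul, hmn, hn, pow_orderOf_eq_one]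
  have hc2ord : orderOf c2 ∣ m := orderOf_dvd_of_pow_eq_one hc2m
  -- Q = ⟨z, c1⟩ is a cyclic p-group
  have hle : zpowers z ≤ Subgroup.center G := zpowers_le.mpr hz
  haveI hnorm : (zpowers z).Normal := by
    constructor
    intro a ha g
    have := (Subgroup.mem_center_iff.mp (hle ha)) g
    have : g * a * g⁻¹ = a := by
      rw [this, mul_assoc, mul_inv_cancel, mul_one]
    rwa [this]
  set Q : Subgroup G := zpowers z ⊔ zpowers c1 with hQdef
  have hQp : IsPGroup p Q := IsPGroup.to_sup_of_normal_left hzP hc1P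
  have hQcyc : IsCyclic Q := aux_pGroup_isCyclic P hcyc hQp
  obtain ⟨w, hw⟩ := hQcyc.exists_generator
  set w0 : G := (w : G) with hw0
  have coe_mem : ∀ x : G, x ∈ Q → x ∈ zpowers w0 := by
    intro x hx
    obtain ⟨j, hj⟩ := mem_zpowers_iff.mp (hw ⟨x, hx⟩)
    refine mem_zpowers_iff.mpr ⟨j, ?_⟩
    have := congrArg (Subtype.val) hj
    simpa using this
  have hzw : z ∈ zpowers w0 :=
    coe_mem z ((le_sup_left : zpowers z ≤ Q) (mem_zpowers z))
  have hc1w : c1 ∈ zpowers w0 :=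
    coe_mem c1 ((le_sup_right : zpowers c1 ≤ Q) (mem_zpowers c1))
  -- w0 is a p-element
  obtain ⟨j, hj⟩ := (IsPGroup.iff_orderOf.mp hQp) w
  have hw0ord : orderOf w0 = p ^ j := by
    rw [hw0, Subgroup.orderOf_coe]
    exact hj
  -- w0 commutes with c2
  have hcomm : Commute w0 c2 := by
    have hQcent : Q ≤ Subgroup.centralizer {c2} := by
      refine sup_le (zpowers_le.mpr ?_) (zpowers_le.mpr ?_)
      · exact Subgroup.mem_centralizer_iff.mpr fun g hg => by
          rw [Set.mem_singleton_iff.mp hg]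
          exact (Subgroup.mem_center_iff.mp hz) c2
      · exact Subgroup.mem_centralizer_iff.mpr fun g hg => by
          rw [Set.mem_singleton_iff.mp hg]
          exact (Commute.refl c).pow_pow (p ^ k) m
    exact (Subgroup.mem_centralizer_iff.mp (hQcent w.2) c2 (Set.mem_singleton c2)).symm
  -- orders of w0 and c2 are coprime
  have hco : Nat.Coprime (orderOf w0) (orderOf c2) := by
    have h1 : Nat.Coprime (p ^ j) m := hcop.pow_left j
    rw [hw0ord]
    exact Nat.Coprime.coprime_dvd_right hc2ord h1
  set u := w0 * c2 with hu
  have hw0u : w0 ∈ zpowers u := by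
    have h1 : u ^ orderOf c2 = w0 ^ orderOf c2 := by
      rw [hu, hcomm.mul_pow, pow_orderOf_eq_one, mul_one]
    have h2 : w0 ∈ zpowers (w0 ^ orderOf c2) := aux_mem_zpowers_pow w0 hco.symm
    rw [← h1] at h2
    exact (zpowers_le.mpr (pow_mem (mem_zpowers u) _)) h2
  have hc2u : c2 ∈ zpowers u := by
    have h1 : u ^ orderOf w0 = c2 ^ orderOf w0 := by
      rw [hu, hcomm.mul_pow, pow_orderOf_eq_one, one_mul]
    have h2 : c2 ∈ zpowers (c2 ^ orderOf w0) := aux_mem_zpowers_pow c2 hco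
    rw [← h1] at h2
    exact (zpowers_le.mpr (pow_mem (mem_zpowers u) _)) h2
  have hzu : z ∈ zpowers u := (zpowers_le.mpr hw0u) hzw
  have hc1u : c1 ∈ zpowers u := (zpowers_le.mpr hw0u) hc1w
  have hcu : c ∈ zpowers u := by
    have hbez : IsCoprime ((p ^ k : ℕ) : ℤ) ((m : ℕ) : ℤ) :=
      Nat.isCoprime_iff_coprime.mpr hcopkm
    obtain ⟨a, b, hab⟩ := hbez
    have hcval : c = c2 ^ a * c1 ^ b := by
      rw [hc2, hc1, ← zpow_natCast c (p ^ k), ← zpow_natCast c m,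
        ← zpow_mul, ← zpow_mul, ← zpow_add]
      have : ((p ^ k : ℕ) : ℤ) * a + ((m : ℕ) : ℤ) * b = 1 := by
        rw [mul_comm _ a, mul_comm _ b]; exact hab
      rw [this, zpow_one]
    rw [hcval]
    exact mul_mem (zpow_mem hc2u a) (zpow_mem hc1u b)
  have hucyc : IsCyclic (zpowers u) := by
    constructor
    refine ⟨⟨u, mem_zpowers u⟩, fun x => ?_⟩
    obtain ⟨j, hj⟩ := mem_zpowers_iff.mp x.2
    exact mem_zpowers_iff.mpr ⟨j, by ext; simpa using hj⟩
  refine aux_isCyclic_of_le hucyc ((Subgroup.closure_le _).mpr ?_)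
  intro y hy
  rcases hy with h | h
  · rw [h]; exact hzu
  · rw [Set.mem_singleton_iff.mp h]; exact hcu

lemma aux_mul_mem_KSet [Finite G] {p : ℕ} [Fact p.Prime] (P : Sylow p G)
    (hcyc : IsCyclic (P : Subgroup G)) {z : G} (hz : z ∈ Subgroup.center G)
    (hzP : IsPGroup p (zpowers z)) {x : G} (hx : x ∈ KSet G) : z * x ∈ KSet G := by
  intro g
  obtain ⟨c, hc⟩ := (hx g).exists_generator
  set c0 : G := (c : G) with hc0
  have coe_mem : ∀ y : G, y ∈ Subgroup.closure ({x, g} : Set G) → y ∈ zpowers c0 := by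
    intro y hy
    obtain ⟨j, hj⟩ := mem_zpowers_iff.mp (hc ⟨y, hy⟩)
    refine mem_zpowers_iff.mpr ⟨j, ?_⟩
    have := congrArg (Subtype.val) hj
    simpa using this
  have hxc : x ∈ zpowers c0 :=
    coe_mem x (Subgroup.subset_closure (by left; rfl))
  have hgc : g ∈ zpowers c0 :=
    coe_mem g (Subgroup.subset_closure (by right; rfl))
  have hcyc2 : IsCyclic (Subgroup.closure ({z, c0} : Set G)) :=
    aux_closure_pair_cyclic P hcyc hz hzP c0
  refine aux_isCyclic_of_le hcyc2 ((Subgroup.closure_le _).mpr ?_)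
  have hzin : z ∈ Subgroup.closure ({z, c0} : Set G) :=
    Subgroup.subset_closure (by left; rfl)
  have hc0in : zpowers c0 ≤ Subgroup.closure ({z, c0} : Set G) :=
    zpowers_le.mpr (Subgroup.subset_closure (by right; rfl))
  intro y hy
  rcases hy with h | h
  · rw [h]; exact mul_mem hzin (hc0in hxc)
  · rw [Set.mem_singleton_iff.mp h]; exact hc0in hgc

end Aux

/-- if a Sylow `p`-subgroup `P` of `G` is cyclic and `Z(G) ∩ P ≠ 1`,
then `p ∣ |K(G)|`. -/
theorem p_dvd_KSet_of_cyclic_sylow_meets_center (G : Type*) [Group G] [Finite G]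
    (p : ℕ) (hp : p.Prime) [Fact p.Prime] (P : Sylow p G)
    (hcyc : IsCyclic (P : Subgroup G))
    (hz : Subgroup.center G ⊓ (P : Subgroup G) ≠ ⊥) :
    p ∣ Nat.card ↥(KSet G) := by
  obtain ⟨z, hzmem, hzne⟩ :=
    (Subgroup.bot_or_exists_ne_one (Subgroup.center G ⊓ (P : Subgroup G))).resolve_left hz
  have hzc : z ∈ Subgroup.center G := hzmem.1
  have hzle : Subgroup.zpowers z ≤ (P : Subgroup G) := Subgroup.zpowers_le.mpr hzmem.2
  have hzP : IsPGroup p (Subgroup.zpowers z) := P.2.to_le hzle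
  letI : MulAction (Subgroup.zpowers z) ↥(KSet G) :=
    { smul := fun u x => ⟨(u : G) * (x : G),
        aux_mul_mem_KSet P hcyc ((Subgroup.zpowers_le.mpr hzc) u.2)
          (hzP.to_le (Subgroup.zpowers_le.mpr u.2)) x.2⟩
      one_smul := fun x => Subtype.ext (one_mul _)
      mul_smul := fun u v x => Subtype.ext (mul_assoc _ _ _) }
  have hmod := hzP.card_modEq_card_fixedPoints ↥(KSet G)
  have hfix : IsEmpty (MulAction.fixedPoints (Subgroup.zpowers z) ↥(KSet G)) := by
    refine ⟨fun x => hzne ?_⟩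
    have hfx := x.2 (⟨z, Subgroup.mem_zpowers z⟩ : Subgroup.zpowers z)
    have : z * (x.1 : G) = (x.1 : G) := congrArg Subtype.val hfx
    exact mul_eq_right.mp this
  have h0 : Nat.card ↥(MulAction.fixedPoints (Subgroup.zpowers z) ↥(KSet G)) = 0 :=
    @Nat.card_of_isEmpty _ hfix
  rw [h0] at hmod
  exact (Nat.modEq_zero_iff_dvd).mp hmod
end

section
/- Let p and q be distinct primes and G a finite non-cyclic {p,q}-group. Then diam(Δ(G)) = 2 if and only if |K(G)| > 1, i.e., if and only if Δ(G) has a universal vertex. -/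
open Subgroup

section Helpers

variable {G : Type*} [Group G]

lemma zpowers_isCyclic (g : G) : IsCyclic (Subgroup.zpowers g) := by
  refine ⟨⟨⟨g, Subgroup.mem_zpowers g⟩, fun x => ?_⟩⟩
  obtain ⟨k, hk⟩ := Subgroup.mem_zpowers_iff.mp x.2
  exact Subgroup.mem_zpowers_iff.mpr ⟨k, Subtype.ext (by simp [hk])⟩

lemma closure_pair_cyclic {x y : G} {H : Subgroup G}
    (hx : x ∈ H) (hy : y ∈ H) (hH : IsCyclic H) :
    IsCyclic (Subgroup.closure ({x, y} : Set G)) := by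
  haveI := hH
  have hle : Subgroup.closure ({x, y} : Set G) ≤ H := by
    rw [Subgroup.closure_le]
    intro w hw
    simp only [Set.mem_insert_iff, Set.mem_singleton_iff] at hw
    rcases hw with rfl | rfl
    · exact hx
    · exact hy
  exact Subgroup.isCyclic_of_le hle

lemma cyclic_pair_of_mem {x y w : G} (hx : x ∈ Subgroup.zpowers w)
    (hy : y ∈ Subgroup.zpowers w) : IsCyclic (Subgroup.closure ({x, y} : Set G)) :=
  closure_pair_cyclic hx hy (zpowers_isCyclic w)

lemma mem_closure_pair_left (x y : G) : x ∈ Subgroup.closure ({x, y} : Set G) :=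
  Subgroup.subset_closure (Set.mem_insert _ _)

lemma mem_closure_pair_right (x y : G) : y ∈ Subgroup.closure ({x, y} : Set G) :=
  Subgroup.subset_closure (Set.mem_insert_of_mem _ rfl)

lemma exists_generator_of_isCyclic {H : Subgroup G} (h : IsCyclic H) :
    ∃ c : G, c ∈ H ∧ ∀ x ∈ H, x ∈ Subgroup.zpowers c := by
  obtain ⟨⟨c, hcH⟩, hc⟩ := h.exists_generator
  refine ⟨c, hcH, fun x hx => ?_⟩
  obtain ⟨k, hk⟩ := Subgroup.mem_zpowers_iff.mp (hc ⟨x, hx⟩)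
  refine Subgroup.mem_zpowers_iff.mpr ⟨k, ?_⟩
  have := congrArg Subtype.val hk
  simpa using this

lemma ne_one_of_orderOf_prime {r : ℕ} (hr : r.Prime) {x : G} (hx : orderOf x = r) : x ≠ 1 := by
  intro h
  rw [h, orderOf_one] at hx
  exact hr.ne_one hx.symm

lemma pow_mem_zpowers (g : G) (k : ℕ) : g ^ k ∈ Subgroup.zpowers g :=
  Subgroup.mem_zpowers_iff.mpr ⟨(k : ℤ), by simp⟩

variable [Finite G]

lemma orderOf_pow_div' {g : G} {r : ℕ} (hr : 1 < r) (hdvd : r ∣ orderOf g) :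
    orderOf (g ^ (orderOf g / r)) = r := by
  have h0 : orderOf g ≠ 0 := (orderOf_pos g).ne'
  rw [orderOf_pow, Nat.gcd_eq_right (Nat.div_dvd_of_dvd hdvd), Nat.div_div_self hdvd h0]

lemma exists_prime_pow_order {g : G} (hg : g ≠ 1) :
    ∃ (k r : ℕ), r.Prime ∧ r ∣ Nat.card G ∧ orderOf (g ^ k) = r := by
  have h1 : orderOf g ≠ 1 := by simpa [orderOf_eq_one_iff] using hg
  have hr := Nat.minFac_prime h1
  exact ⟨orderOf g / (orderOf g).minFac, _, hr,
    dvd_trans (Nat.minFac_dvd _) (orderOf_dvd_natCard g),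
    orderOf_pow_div' hr.one_lt (Nat.minFac_dvd _)⟩

lemma mem_zpowers_of_prime_order {r : ℕ} (hr : r.Prime)
    {x s : G} {C : Subgroup G} (hC : IsCyclic C) (hxC : x ∈ C) (hsC : s ∈ C)
    (hox : orderOf x = r) (hos : orderOf s = r) : x ∈ Subgroup.zpowers s := by
  classical
  haveI := Fintype.ofFinite C
  haveI := hC
  set X : C := ⟨x, hxC⟩ with hX
  set S : C := ⟨s, hsC⟩ with hS
  have hoX : orderOf X = r := by rw [Subgroup.orderOf_mk, hox]
  have hoS : orderOf S = r := by rw [Subgroup.orderOf_mk, hos]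
  have hmem : X ∈ Subgroup.zpowers S := by
    by_contra hX'
    have hcard : ({a : C | a ^ r = 1} : Finset C).card ≤ r :=
      IsCyclic.card_pow_eq_one_le hr.pos
    set F := (Subgroup.zpowers S : Set C).toFinset with hF
    have hsub : insert X F ⊆ ({a : C | a ^ r = 1} : Finset C) := by
      intro a ha
      rcases Finset.mem_insert.mp ha with rfl | haF
      · simp only [Finset.mem_filter, Finset.mem_univ, true_and, Set.mem_setOf_eq]
        rw [← hoX]; exact pow_orderOf_eq_one _
      · obtain ⟨k, hk⟩ := Subgroup.mem_zpowers_iff.mp (Set.mem_toFinset.mp haF)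
        simp only [Finset.mem_filter, Finset.mem_univ, true_and, Set.mem_setOf_eq]
        rw [← hk, ← zpow_natCast, ← zpow_mul, mul_comm, zpow_mul, zpow_natCast, ← hoS,
          pow_orderOf_eq_one, one_zpow]
    have hXF : X ∉ F := by
      intro h
      exact hX' (Set.mem_toFinset.mp h)
    have hFcard : F.card = r := by
      rw [hF, Set.toFinset_card]
      simp only [SetLike.coe_sort_coe]
      rw [Fintype.card_zpowers, hoS]
    have := Finset.card_le_card hsub
    rw [Finset.card_insert_of_notMem hXF, hFcard] at this
    omega
  obtain ⟨k, hk⟩ := Subgroup.mem_zpowers_iff.mp hmem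
  refine Subgroup.mem_zpowers_iff.mpr ⟨k, ?_⟩
  have := congrArg Subtype.val hk
  simpa using this

end Helpers

section Forward

variable {G : Type*} [Group G] [Finite G] {p q : ℕ}

/-- Lemma A: under diameter-2 hypothesis, every order-`p` element and order-`q` element
generate a cyclic subgroup. -/
lemma lemA (hp : p.Prime) (hq : q.Prime)
    (hfacR : ∀ r : ℕ, r.Prime → r ∣ Nat.card G → r = p ∨ r = q)
    (D2 : ∀ x y : G, x ≠ 1 → y ≠ 1 → ∃ z : G, z ≠ 1 ∧
      IsCyclic (Subgroup.closure ({x, z} : Set G)) ∧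
      IsCyclic (Subgroup.closure ({z, y} : Set G)))
    {a b : G} (ha : orderOf a = p) (hb : orderOf b = q) :
    IsCyclic (Subgroup.closure ({a, b} : Set G)) := by
  have ha1 : a ≠ 1 := ne_one_of_orderOf_prime hp ha
  have hb1 : b ≠ 1 := ne_one_of_orderOf_prime hq hb
  obtain ⟨z, hz1, hC1, hC2⟩ := D2 a b ha1 hb1
  obtain ⟨k, r, hr, hdvd, hks⟩ := exists_prime_pow_order hz1
  have hsC1 : z ^ k ∈ Subgroup.closure ({a, z} : Set G) :=
    Subgroup.pow_mem _ (mem_closure_pair_right a z) k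
  have hsC2 : z ^ k ∈ Subgroup.closure ({z, b} : Set G) :=
    Subgroup.pow_mem _ (mem_closure_pair_left z b) k
  have hzle1 : Subgroup.zpowers z ≤ Subgroup.closure ({a, z} : Set G) :=
    Subgroup.zpowers_le.mpr (mem_closure_pair_right a z)
  have hzle2 : Subgroup.zpowers z ≤ Subgroup.closure ({z, b} : Set G) :=
    Subgroup.zpowers_le.mpr (mem_closure_pair_left z b)
  have hsz : Subgroup.zpowers (z ^ k) ≤ Subgroup.zpowers z :=
    Subgroup.zpowers_le.mpr (pow_mem_zpowers z k)
  rcases hfacR r hr hdvd with rfl | rfl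
  · -- r = p : a ∈ ⟨z^k⟩ ⊆ ⟨z⟩ ⊆ closure {z, b}
    have hmem : a ∈ Subgroup.zpowers (z ^ k) :=
      mem_zpowers_of_prime_order hr hC1 (mem_closure_pair_left a z) hsC1 ha hks
    exact closure_pair_cyclic (hzle2 (hsz hmem)) (mem_closure_pair_right z b) hC2
  · -- r = q : b ∈ ⟨z^k⟩ ⊆ ⟨z⟩ ⊆ closure {a, z}
    have hmem : b ∈ Subgroup.zpowers (z ^ k) :=
      mem_zpowers_of_prime_order hr hC2 (mem_closure_pair_right z b) hsC2 hb hks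
    exact closure_pair_cyclic (mem_closure_pair_left a z) (hzle1 (hsz hmem)) hC1

/-- Lemma B: every nonidentity `g` is "adjacent" to `a` or to `b`. -/
lemma lemB (hp : p.Prime) (hq : q.Prime)
    (hfacR : ∀ r : ℕ, r.Prime → r ∣ Nat.card G → r = p ∨ r = q)
    (D2 : ∀ x y : G, x ≠ 1 → y ≠ 1 → ∃ z : G, z ≠ 1 ∧
      IsCyclic (Subgroup.closure ({x, z} : Set G)) ∧
      IsCyclic (Subgroup.closure ({z, y} : Set G)))
    {a b : G} (ha : orderOf a = p) (hb : orderOf b = q) {g : G} (hg : g ≠ 1) :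
    IsCyclic (Subgroup.closure ({a, g} : Set G)) ∨
      IsCyclic (Subgroup.closure ({b, g} : Set G)) := by
  have ha1 : a ≠ 1 := ne_one_of_orderOf_prime hp ha
  obtain ⟨c, hcmem, hgen⟩ := exists_generator_of_isCyclic (lemA hp hq hfacR D2 ha hb)
  have hac : a ∈ Subgroup.zpowers c := hgen a (mem_closure_pair_left a b)
  have hbc : b ∈ Subgroup.zpowers c := hgen b (mem_closure_pair_right a b)
  have hc1 : c ≠ 1 := by
    rintro rfl
    rw [Subgroup.zpowers_one_eq_bot, Subgroup.mem_bot] at hac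
    exact ha1 hac
  obtain ⟨z, hz1, hC1, hC2⟩ := D2 c g hc1 hg
  obtain ⟨k, r, hr, hdvd, hks⟩ := exists_prime_pow_order hz1
  have hcle : Subgroup.zpowers c ≤ Subgroup.closure ({c, z} : Set G) :=
    Subgroup.zpowers_le.mpr (mem_closure_pair_left c z)
  have haC1 : a ∈ Subgroup.closure ({c, z} : Set G) := hcle hac
  have hbC1 : b ∈ Subgroup.closure ({c, z} : Set G) := hcle hbc
  have hsC1 : z ^ k ∈ Subgroup.closure ({c, z} : Set G) :=
    Subgroup.pow_mem _ (mem_closure_pair_right c z) k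
  have hsz : Subgroup.zpowers (z ^ k) ≤ Subgroup.zpowers z :=
    Subgroup.zpowers_le.mpr (pow_mem_zpowers z k)
  have hzle2 : Subgroup.zpowers z ≤ Subgroup.closure ({z, g} : Set G) :=
    Subgroup.zpowers_le.mpr (mem_closure_pair_left z g)
  rcases hfacR r hr hdvd with rfl | rfl
  · left
    have hmem : a ∈ Subgroup.zpowers (z ^ k) :=
      mem_zpowers_of_prime_order hr hC1 haC1 hsC1 ha hks
    exact closure_pair_cyclic (hzle2 (hsz hmem)) (mem_closure_pair_right z g) hC2
  · right
    have hmem : b ∈ Subgroup.zpowers (z ^ k) :=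
      mem_zpowers_of_prime_order hr hC1 hbC1 hsC1 hb hks
    exact closure_pair_cyclic (hzle2 (hsz hmem)) (mem_closure_pair_right z g) hC2

end Forward

section Forward2

variable {G : Type*} [Group G] [Finite G] {p q : ℕ}

/-- From `s ∈ ⟨x⟩` with both of the same prime order, get `x ∈ ⟨s⟩`. -/
lemma mem_zpowers_symm_of_prime_order {r : ℕ} (hr : r.Prime) {x s : G}
    (hox : orderOf x = r) (hos : orderOf s = r) (hs : s ∈ Subgroup.zpowers x) :
    x ∈ Subgroup.zpowers s :=
  mem_zpowers_of_prime_order hr (zpowers_isCyclic x) (Subgroup.mem_zpowers x) hs hox hos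

/-- The case where the order-`q` subgroup is not unique leads to a contradiction. -/
lemma forward_aux (hp : p.Prime) (hq : q.Prime)
    (hfacR : ∀ r : ℕ, r.Prime → r ∣ Nat.card G → r = p ∨ r = q)
    (D2 : ∀ x y : G, x ≠ 1 → y ≠ 1 → ∃ z : G, z ≠ 1 ∧
      IsCyclic (Subgroup.closure ({x, z} : Set G)) ∧
      IsCyclic (Subgroup.closure ({z, y} : Set G)))
    (NK : ∀ x : G, x ≠ 1 → ∃ g : G, ¬ IsCyclic (Subgroup.closure ({x, g} : Set G)))
    {a₀ b₀ : G} (ha : orderOf a₀ = p) (hb : orderOf b₀ = q)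
    (hUq : ¬ ∀ b' : G, orderOf b' = q → b' ∈ Subgroup.zpowers b₀) : False := by
  push_neg at hUq
  obtain ⟨b₁, hb₁, hb₁n⟩ := hUq
  -- H1 : every order-p element is adjacent to every element with a power of order q
  have H1 : ∀ a w : G, orderOf a = p → (∃ k : ℕ, orderOf (w ^ k) = q) →
      IsCyclic (Subgroup.closure ({a, w} : Set G)) := by
    rintro a w ha' ⟨k, hk⟩
    by_contra hncyc
    have hw1 : w ≠ 1 := by
      rintro rfl
      rw [one_pow, orderOf_one] at hk
      exact hq.ne_one hk.symm
    have h0 := (lemB hp hq hfacR D2 ha' hb hw1).resolve_left hncyc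
    have h1 := (lemB hp hq hfacR D2 ha' hb₁ hw1).resolve_left hncyc
    have hsC0 : w ^ k ∈ Subgroup.closure ({b₀, w} : Set G) :=
      Subgroup.pow_mem _ (mem_closure_pair_right b₀ w) k
    have hsC1 : w ^ k ∈ Subgroup.closure ({b₁, w} : Set G) :=
      Subgroup.pow_mem _ (mem_closure_pair_right b₁ w) k
    have hb0s : b₀ ∈ Subgroup.zpowers (w ^ k) :=
      mem_zpowers_of_prime_order hq h0 (mem_closure_pair_left b₀ w) hsC0 hb hk
    have hb1s : b₁ ∈ Subgroup.zpowers (w ^ k) :=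
      mem_zpowers_of_prime_order hq h1 (mem_closure_pair_left b₁ w) hsC1 hb₁ hk
    exact hb₁n (mem_zpowers_of_prime_order hq (zpowers_isCyclic (w ^ k)) hb1s hb0s hb₁ hb)
  -- generator of ⟨a₀, b₀⟩
  obtain ⟨c, hcmem, hgen⟩ := exists_generator_of_isCyclic (lemA hp hq hfacR D2 ha hb)
  have hac : a₀ ∈ Subgroup.zpowers c := hgen a₀ (mem_closure_pair_left a₀ b₀)
  have hbc : b₀ ∈ Subgroup.zpowers c := hgen b₀ (mem_closure_pair_right a₀ b₀)
  have hqc : q ∣ orderOf c := by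
    have := Subgroup.card_dvd_of_le (Subgroup.zpowers_le.mpr hbc)
    rwa [Nat.card_zpowers, Nat.card_zpowers, hb] at this
  have hq_pow : ∃ k : ℕ, orderOf (c ^ k) = q :=
    ⟨orderOf c / q, orderOf_pow_div' hq.one_lt hqc⟩
  -- uniqueness of the order-p subgroup
  have Up : ∀ a' : G, orderOf a' = p → a' ∈ Subgroup.zpowers a₀ := by
    intro a' ha'
    have hc' := H1 a' c ha' hq_pow
    have hacc : a₀ ∈ Subgroup.closure ({a', c} : Set G) :=
      Subgroup.zpowers_le.mpr (mem_closure_pair_right a' c) hac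
    have hmem : a' ∈ Subgroup.zpowers a₀ :=
      mem_zpowers_of_prime_order hp hc' (mem_closure_pair_left a' c) hacc ha' ha
    exact hmem
  -- contradiction via NK a₀
  have ha1 : a₀ ≠ 1 := ne_one_of_orderOf_prime hp ha
  obtain ⟨g, hg⟩ := NK a₀ ha1
  have hg1 : g ≠ 1 := by
    rintro rfl
    exact hg (cyclic_pair_of_mem (Subgroup.mem_zpowers a₀) (Subgroup.one_mem _))
  by_cases hgq : ∃ k : ℕ, orderOf (g ^ k) = q
  · exact hg (H1 a₀ g ha hgq)
  · obtain ⟨k, r, hr, hdvd, hks⟩ := exists_prime_pow_order hg1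
    rcases hfacR r hr hdvd with rfl | rfl
    · have hmem : g ^ k ∈ Subgroup.zpowers a₀ := Up _ hks
      have : a₀ ∈ Subgroup.zpowers (g ^ k) :=
        mem_zpowers_symm_of_prime_order hr ha hks hmem
      have hag : a₀ ∈ Subgroup.zpowers g :=
        Subgroup.zpowers_le.mpr (pow_mem_zpowers g k) this
      exact hg (cyclic_pair_of_mem hag (Subgroup.mem_zpowers g))
    · exact hgq ⟨k, hks⟩

/-- The case where both prime-order subgroups are unique leads to a contradiction. -/
lemma forward_case3 (hp : p.Prime) (hq : q.Prime)
    (hfacR : ∀ r : ℕ, r.Prime → r ∣ Nat.card G → r = p ∨ r = q)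
    (D2 : ∀ x y : G, x ≠ 1 → y ≠ 1 → ∃ z : G, z ≠ 1 ∧
      IsCyclic (Subgroup.closure ({x, z} : Set G)) ∧
      IsCyclic (Subgroup.closure ({z, y} : Set G)))
    (NK : ∀ x : G, x ≠ 1 → ∃ g : G, ¬ IsCyclic (Subgroup.closure ({x, g} : Set G)))
    {a₀ b₀ : G} (ha : orderOf a₀ = p) (hb : orderOf b₀ = q)
    (hUp : ∀ a' : G, orderOf a' = p → a' ∈ Subgroup.zpowers a₀)
    (hUq : ∀ b' : G, orderOf b' = q → b' ∈ Subgroup.zpowers b₀) : False := by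
  have ha1 : a₀ ≠ 1 := ne_one_of_orderOf_prime hp ha
  have hb1 : b₀ ≠ 1 := ne_one_of_orderOf_prime hq hb
  obtain ⟨g, hg⟩ := NK a₀ ha1
  obtain ⟨h, hh⟩ := NK b₀ hb1
  have hg1 : g ≠ 1 := by
    rintro rfl
    exact hg (cyclic_pair_of_mem (Subgroup.mem_zpowers a₀) (Subgroup.one_mem _))
  have hh1 : h ≠ 1 := by
    rintro rfl
    exact hh (cyclic_pair_of_mem (Subgroup.mem_zpowers b₀) (Subgroup.one_mem _))
  obtain ⟨z, hz1, hC1, hC2⟩ := D2 h g hh1 hg1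
  obtain ⟨k, r, hr, hdvd, hks⟩ := exists_prime_pow_order hz1
  have hsz : Subgroup.zpowers (z ^ k) ≤ Subgroup.zpowers z :=
    Subgroup.zpowers_le.mpr (pow_mem_zpowers z k)
  rcases hfacR r hr hdvd with rfl | rfl
  · -- r = p : a₀ ∈ ⟨z⟩ ⊆ closure {z, g}, so ⟨a₀, g⟩ cyclic, contradiction
    have hmem : z ^ k ∈ Subgroup.zpowers a₀ := hUp _ hks
    have ha0z : a₀ ∈ Subgroup.zpowers z :=
      hsz (mem_zpowers_symm_of_prime_order hr ha hks hmem)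
    have ha0C : a₀ ∈ Subgroup.closure ({z, g} : Set G) :=
      Subgroup.zpowers_le.mpr (mem_closure_pair_left z g) ha0z
    exact hg (closure_pair_cyclic ha0C (mem_closure_pair_right z g) hC2)
  · -- r = q : b₀ ∈ ⟨z⟩ ⊆ closure {h, z}, so ⟨b₀, h⟩ cyclic, contradiction
    have hmem : z ^ k ∈ Subgroup.zpowers b₀ := hUq _ hks
    have hb0z : b₀ ∈ Subgroup.zpowers z :=
      hsz (mem_zpowers_symm_of_prime_order hr hb hks hmem)
    have hb0C : b₀ ∈ Subgroup.closure ({h, z} : Set G) :=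
      Subgroup.zpowers_le.mpr (mem_closure_pair_right h z) hb0z
    exact hh (closure_pair_cyclic hb0C (mem_closure_pair_left h z) hC1)

/-- Main combinatorial content of the forward direction. -/
lemma forward_main (hp : p.Prime) (hq : q.Prime)
    (hfacR : ∀ r : ℕ, r.Prime → r ∣ Nat.card G → r = p ∨ r = q)
    (D2 : ∀ x y : G, x ≠ 1 → y ≠ 1 → ∃ z : G, z ≠ 1 ∧
      IsCyclic (Subgroup.closure ({x, z} : Set G)) ∧
      IsCyclic (Subgroup.closure ({z, y} : Set G)))
    (NK : ∀ x : G, x ≠ 1 → ∃ g : G, ¬ IsCyclic (Subgroup.closure ({x, g} : Set G)))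
    (hpdvd : p ∣ Nat.card G) (hqdvd : q ∣ Nat.card G) : False := by
  haveI : Fact p.Prime := ⟨hp⟩
  haveI : Fact q.Prime := ⟨hq⟩
  obtain ⟨a₀, ha⟩ := exists_prime_orderOf_dvd_card' p hpdvd
  obtain ⟨b₀, hb⟩ := exists_prime_orderOf_dvd_card' q hqdvd
  by_cases hUq : ∀ b' : G, orderOf b' = q → b' ∈ Subgroup.zpowers b₀
  · by_cases hUp : ∀ a' : G, orderOf a' = p → a' ∈ Subgroup.zpowers a₀
    · exact forward_case3 hp hq hfacR D2 NK ha hb hUp hUq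
    · -- symmetric application with roles of p and q swapped
      have hfacR' : ∀ r : ℕ, r.Prime → r ∣ Nat.card G → r = q ∨ r = p :=
        fun r hr hd => (hfacR r hr hd).symm
      have D2' : ∀ x y : G, x ≠ 1 → y ≠ 1 → ∃ z : G, z ≠ 1 ∧
          IsCyclic (Subgroup.closure ({x, z} : Set G)) ∧
          IsCyclic (Subgroup.closure ({z, y} : Set G)) := D2
      exact forward_aux hq hp hfacR' D2' NK hb ha hUp
  · exact forward_aux hp hq hfacR D2 NK ha hb hUq

end Forward2

section Backward

variable {G : Type*} [Group G] [Finite G]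

lemma one_mem_KSet' : (1 : G) ∈ {x : G | ∀ g : G, IsCyclic (Subgroup.closure ({x, g} : Set G))} :=
  fun g => cyclic_pair_of_mem (Subgroup.one_mem _) (Subgroup.mem_zpowers g)

lemma exists_noncyclic_pair (hnc : ¬ IsCyclic G) :
    ∃ u v : G, u ≠ 1 ∧ v ≠ 1 ∧ u ≠ v ∧
      ¬ IsCyclic (Subgroup.closure ({u, v} : Set G)) := by
  by_contra hcon
  push_neg at hcon
  apply hnc
  have hall : ∀ u v : G, IsCyclic (Subgroup.closure ({u, v} : Set G)) := by
    intro u v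
    rcases eq_or_ne u 1 with rfl | hu
    · exact cyclic_pair_of_mem (Subgroup.one_mem _) (Subgroup.mem_zpowers v)
    rcases eq_or_ne v 1 with rfl | hv
    · exact cyclic_pair_of_mem (Subgroup.mem_zpowers u) (Subgroup.one_mem _)
    rcases eq_or_ne u v with rfl | huv
    · exact cyclic_pair_of_mem (Subgroup.mem_zpowers u) (Subgroup.mem_zpowers u)
    · exact hcon u v hu hv huv
  have hcomm : ∀ u v : G, u * v = v * u := by
    intro u v
    obtain ⟨c, hcmem, hgen⟩ := exists_generator_of_isCyclic (hall u v)
    obtain ⟨k, hk⟩ := Subgroup.mem_zpowers_iff.mp (hgen u (mem_closure_pair_left u v))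
    obtain ⟨l, hl⟩ := Subgroup.mem_zpowers_iff.mp (hgen v (mem_closure_pair_right u v))
    rw [← hk, ← hl, ← zpow_add, ← zpow_add, add_comm]
  letI : CommGroup G := { (inferInstance : Group G) with mul_comm := hcomm }
  obtain ⟨g, hg⟩ := Monoid.exists_orderOf_eq_exponent (G := G) Monoid.ExponentExists.of_finite
  refine ⟨⟨g, fun x => ?_⟩⟩
  obtain ⟨c, hcmem, hgen⟩ := exists_generator_of_isCyclic (hall g x)
  have hgc : g ∈ Subgroup.zpowers c := hgen g (mem_closure_pair_left g x)
  have h1 : orderOf g ∣ orderOf c := by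
    have := Subgroup.card_dvd_of_le (Subgroup.zpowers_le.mpr hgc)
    rwa [Nat.card_zpowers, Nat.card_zpowers] at this
  have h2 : orderOf c ∣ orderOf g := hg ▸ Monoid.order_dvd_exponent c
  have heq : Subgroup.zpowers g = Subgroup.zpowers c := by
    apply Subgroup.eq_of_le_of_card_ge (Subgroup.zpowers_le.mpr hgc)
    rw [Nat.card_zpowers, Nat.card_zpowers]
    exact Nat.le_of_dvd (orderOf_pos g) h2
  show x ∈ Subgroup.zpowers g
  rw [heq]
  exact hgen x (mem_closure_pair_right g x)

lemma walk_cases {V : Type*} {H : SimpleGraph V} {u v : V} (p : H.Walk u v)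
    (hl : p.length ≤ 2) :
    u = v ∨ H.Adj u v ∨ ∃ z, H.Adj u z ∧ H.Adj z v := by
  cases p with
  | nil => exact Or.inl rfl
  | cons h p' =>
    cases p' with
    | nil => exact Or.inr (Or.inl h)
    | cons h2 p'' =>
      have hlen : p''.length = 0 := by
        simp only [SimpleGraph.Walk.length_cons] at hl
        omega
      have := SimpleGraph.Walk.eq_of_length_eq_zero hlen
      subst this
      exact Or.inr (Or.inr ⟨_, h, h2⟩)

end Backward

/-- for a finite non-cyclic `{p,q}`-group, `diam(Δ(G)) = 2` iff `|K(G)| > 1`. -/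
theorem diam_eq_two_iff_KSet_nontrivial (G : Type*) [Group G] [Finite G]
    (p q : ℕ) (hp : p.Prime) (hq : q.Prime) (hpq : p ≠ q)
    (hfac : (Nat.card G).primeFactors = {p, q}) (hnc : ¬ IsCyclic G) :
    (enhancedPowerGraph G).diam = 2 ↔ 1 < Nat.card ↥(KSet G) := by
  have hcard0 : Nat.card G ≠ 0 := Nat.card_pos.ne'
  have hpdvd : p ∣ Nat.card G := Nat.dvd_of_mem_primeFactors
    (by rw [hfac]; exact Finset.mem_insert_self p {q})
  have hqdvd : q ∣ Nat.card G := Nat.dvd_of_mem_primeFactors (by rw [hfac]; simp)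
  have hfacR : ∀ r : ℕ, r.Prime → r ∣ Nat.card G → r = p ∨ r = q := by
    intro r hr hd
    have hmem : r ∈ (Nat.card G).primeFactors := Nat.mem_primeFactors.mpr ⟨hr, hd, hcard0⟩
    rw [hfac] at hmem
    simpa using hmem
  have h1K : (1 : G) ∈ KSet G := one_mem_KSet'
  constructor
  · -- forward direction
    intro hdiam
    by_contra hK
    push_neg at hK
    have hsub : Subsingleton ↥(KSet G) := by
      have hpos : 0 < Nat.card ↥(KSet G) :=
        Nat.card_pos_iff.mpr ⟨⟨⟨1, h1K⟩⟩, inferInstance⟩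
      have h1 : Nat.card ↥(KSet G) = 1 := le_antisymm hK hpos
      exact (Nat.card_eq_one_iff_unique.mp h1).1
    have NK : ∀ x : G, x ≠ 1 → ∃ g : G, ¬ IsCyclic (Subgroup.closure ({x, g} : Set G)) := by
      intro x hx
      by_contra hcon
      push_neg at hcon
      have hxK : x ∈ KSet G := hcon
      have := hsub.elim (⟨x, hxK⟩ : ↥(KSet G)) ⟨1, h1K⟩
      exact hx (congrArg Subtype.val this)
    have hne : (enhancedPowerGraph G).ediam ≠ ⊤ :=
      SimpleGraph.ediam_ne_top_of_diam_ne_zero (by rw [hdiam]; norm_num)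
    have hediam : (enhancedPowerGraph G).ediam = 2 := by
      have h := ENat.coe_toNat hne
      rw [show (enhancedPowerGraph G).ediam.toNat = 2 from hdiam] at h
      exact_mod_cast h.symm
    have D2 : ∀ x y : G, x ≠ 1 → y ≠ 1 → ∃ z : G, z ≠ 1 ∧
        IsCyclic (Subgroup.closure ({x, z} : Set G)) ∧
        IsCyclic (Subgroup.closure ({z, y} : Set G)) := by
      intro x y hx hy
      have hle : (enhancedPowerGraph G).edist ⟨x, hx⟩ ⟨y, hy⟩ ≤ 2 :=
        hediam ▸ SimpleGraph.edist_le_ediam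
      have hnetop : (enhancedPowerGraph G).edist ⟨x, hx⟩ ⟨y, hy⟩ ≠ ⊤ := by
        intro h
        rw [h] at hle
        exact (by norm_num : ¬ ((⊤ : ℕ∞) ≤ 2)) hle
      obtain ⟨w, hw⟩ := SimpleGraph.exists_walk_of_edist_ne_top hnetop
      have hwl : w.length ≤ 2 := by
        have h2 : (w.length : ℕ∞) ≤ 2 := by rw [hw]; exact hle
        exact_mod_cast h2
      rcases walk_cases w hwl with huv | hadj | ⟨z, hz1, hz2⟩
      · have hxy : x = y := congrArg Subtype.val huv
        subst hxy
        exact ⟨x, hx, cyclic_pair_of_mem (Subgroup.mem_zpowers x) (Subgroup.mem_zpowers x),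
          cyclic_pair_of_mem (Subgroup.mem_zpowers x) (Subgroup.mem_zpowers x)⟩
      · exact ⟨x, hx, cyclic_pair_of_mem (Subgroup.mem_zpowers x) (Subgroup.mem_zpowers x),
          hadj.2⟩
      · exact ⟨z.1, z.2, hz1.2, hz2.2⟩
    exact (forward_main hp hq hfacR D2 NK hpdvd hqdvd).elim
  · -- backward direction
    intro hK
    haveI : Nontrivial ↥(KSet G) := Finite.one_lt_card_iff_nontrivial.mp hK
    obtain ⟨⟨x, hxK⟩, hxne⟩ := exists_ne (⟨1, h1K⟩ : ↥(KSet G))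
    have hx1 : x ≠ 1 := fun h => hxne (Subtype.ext h)
    have hadjx : ∀ v : {g : G // g ≠ 1}, v ≠ ⟨x, hx1⟩ →
        (enhancedPowerGraph G).Adj ⟨x, hx1⟩ v :=
      fun v hv => ⟨Ne.symm hv, hxK v.1⟩
    have hle2 : (enhancedPowerGraph G).ediam ≤ 2 := by
      rw [SimpleGraph.ediam_le_iff]
      intro u v
      rcases eq_or_ne u v with rfl | huv
      · simp [SimpleGraph.edist_self]
      by_cases hadj : (enhancedPowerGraph G).Adj u v
      · rw [SimpleGraph.edist_eq_one_iff_adj.mpr hadj]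
        norm_num
      · have hux : u ≠ ⟨x, hx1⟩ := by
          rintro rfl
          exact hadj (hadjx v (Ne.symm huv))
        have hvx : v ≠ ⟨x, hx1⟩ := by
          rintro rfl
          exact hadj ((hadjx u hux).symm)
        have a1 : (enhancedPowerGraph G).Adj u ⟨x, hx1⟩ := (hadjx u hux).symm
        have a2 : (enhancedPowerGraph G).Adj ⟨x, hx1⟩ v := hadjx v hvx
        have hwalk := SimpleGraph.edist_le
          (SimpleGraph.Walk.cons a1 (SimpleGraph.Walk.cons a2 SimpleGraph.Walk.nil))
        simpa using hwalk
    obtain ⟨u0, v0, hu0, hv0, huv0, hncyc⟩ := exists_noncyclic_pair hnc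
    have h2le : 2 ≤ (enhancedPowerGraph G).edist ⟨u0, hu0⟩ ⟨v0, hv0⟩ := by
      by_contra hlt
      push_neg at hlt
      have htop : (enhancedPowerGraph G).edist ⟨u0, hu0⟩ ⟨v0, hv0⟩ ≠ ⊤ := ne_top_of_lt hlt
      lift (enhancedPowerGraph G).edist ⟨u0, hu0⟩ ⟨v0, hv0⟩ to ℕ using htop with n hn
      have hn2 : n < 2 := by exact_mod_cast hlt
      interval_cases n
      · have h0 : (enhancedPowerGraph G).edist ⟨u0, hu0⟩ ⟨v0, hv0⟩ = 0 := by
          rw [← hn]; norm_num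
        exact huv0 (congrArg Subtype.val (SimpleGraph.edist_eq_zero_iff.mp h0))
      · have h1 : (enhancedPowerGraph G).edist ⟨u0, hu0⟩ ⟨v0, hv0⟩ = 1 := by
          rw [← hn]; norm_num
        exact hncyc (SimpleGraph.edist_eq_one_iff_adj.mp h1).2
    have hediam : (enhancedPowerGraph G).ediam = 2 :=
      le_antisymm hle2 (le_trans h2le SimpleGraph.edist_le_ediam)
    show (enhancedPowerGraph G).ediam.toNat = 2
    rw [hediam]
    rfl
end

section
/- Let G be a finite group and p a prime such that p divides |K(G)|. If a subgroup Z ≤ K(G) has order p and X ≤ G is any subgroup of order p, then X = Z; in particular G has a unique subgroup of order p. -/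
lemma mem_zpowers_of_cyclic (H : Type*) [Group H] [Finite H] [IsCyclic H] (p : ℕ) (hp : p.Prime)
    (z x : H) (hz : orderOf z = p) (hx : x ^ p = 1) : x ∈ Subgroup.zpowers z := by
  classical
  have : Fintype H := Fintype.ofFinite H
  have hle := IsCyclic.card_pow_eq_one_le (α := H) (n := p) hp.pos
  have hsub : (Subgroup.zpowers z : Set H).toFinset ⊆ Finset.univ.filter fun a => a ^ p = 1 := by
    intro a ha
    simp only [Set.mem_toFinset, SetLike.mem_coe, Subgroup.mem_zpowers_iff] at ha
    obtain ⟨k, rfl⟩ := ha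
    simp only [Finset.mem_filter, Finset.mem_univ, true_and]
    rw [← zpow_natCast, ← zpow_mul, mul_comm, zpow_mul, zpow_natCast, ← hz,
      pow_orderOf_eq_one, one_zpow]
  have hcard : ((Subgroup.zpowers z : Set H).toFinset).card = p := by
    rw [Set.toFinset_card]
    rw [show Fintype.card (Subgroup.zpowers z : Set H) = Nat.card (Subgroup.zpowers z) from
      (Nat.card_eq_fintype_card).symm, Nat.card_zpowers, hz]
  have heq : (Subgroup.zpowers z : Set H).toFinset = Finset.univ.filter fun a => a ^ p = 1 :=
    Finset.eq_of_subset_of_card_le hsub (by rw [hcard]; exact hle)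
  have : x ∈ (Subgroup.zpowers z : Set H).toFinset := by
    rw [heq]; simp [hx]
  simpa using this

lemma exists_orderOf_eq (G : Type*) [Group G] [Finite G] (p : ℕ) (hp : p.Prime)
    (Z : Subgroup G) (hZ : Nat.card Z = p) : ∃ z ∈ Z, orderOf z = p := by
  have : Fintype Z := Fintype.ofFinite Z
  have : Fact p.Prime := ⟨hp⟩
  obtain ⟨z, hz⟩ := exists_prime_orderOf_dvd_card (G := Z) p
    (by rw [← Nat.card_eq_fintype_card, hZ])
  exact ⟨z.1, z.2, by rw [← hz]; exact Subgroup.orderOf_coe z⟩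

/-- if `p ∣ |K(G)|`, `Z ≤ K(G)` has order `p`, and `X ≤ G` has order `p`,
then `X = Z`; in particular `G` has a unique subgroup of order `p`. -/
theorem unique_subgroup_of_order_p_of_dvd_KSet (G : Type*) [Group G] [Finite G]
    (p : ℕ) (hp : p.Prime) (hdvd : p ∣ Nat.card ↥(KSet G))
    (Z : Subgroup G) (hZK : (Z : Set G) ⊆ KSet G) (hZ : Nat.card Z = p) :
    ∀ X : Subgroup G, Nat.card X = p → X = Z := by
  intro X hX
  obtain ⟨z, hzZ, hz⟩ := exists_orderOf_eq G p hp Z hZ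
  obtain ⟨x, hxX, hx⟩ := exists_orderOf_eq G p hp X hX
  have hc : IsCyclic (Subgroup.closure ({z, x} : Set G)) := hZK hzZ x
  set H := Subgroup.closure ({z, x} : Set G) with hH
  have hzH : z ∈ H := Subgroup.subset_closure (Set.mem_insert _ _)
  have hxH : x ∈ H := Subgroup.subset_closure (Set.mem_insert_of_mem _ rfl)
  have hz' : orderOf (⟨z, hzH⟩ : H) = p := by rwa [Subgroup.orderOf_mk]
  have hx' : (⟨x, hxH⟩ : H) ^ p = 1 := by
    ext; simp [← hx, pow_orderOf_eq_one]
  have hmem := mem_zpowers_of_cyclic H p hp ⟨z, hzH⟩ ⟨x, hxH⟩ hz' hx'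
  have hxz : x ∈ Subgroup.zpowers z := by
    obtain ⟨k, hk⟩ := hmem
    exact ⟨k, congrArg Subtype.val hk⟩
  have hZz : Subgroup.zpowers z = Z :=
    Subgroup.eq_of_le_of_card_ge (Subgroup.zpowers_le.mpr hzZ)
      (by rw [Nat.card_zpowers, hz, hZ])
  have hXx : Subgroup.zpowers x = X :=
    Subgroup.eq_of_le_of_card_ge (Subgroup.zpowers_le.mpr hxX)
      (by rw [Nat.card_zpowers, hx, hX])
  rw [← hXx, ← hZz]
  exact Subgroup.eq_of_le_of_card_ge (Subgroup.zpowers_le.mpr hxz)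
    (by rw [Nat.card_zpowers, Nat.card_zpowers, hx, hz])
end
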